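/- arXiv:1110.4978 — 10 statements merged into one kernel-verified Lean document; each statement's English description precedes it below -/
import Mathlib

section
/- Let P be a definite clause program and S a specification such that every atom of S is covered by P w.r.t. S. If the ground program ground(P) terminates in the sense that there is no infinite fair derivation from any ground query consisting of atoms in S, then every atom of S is in the least Herbrand model M_P, i.e., P is complete w.r.t. S. In particular, if P is recurrent w.r.t. some level mapping, then coveredness of all atoms of S implies S ⊆ M_P. -/
/-!
Part (b) is well-founded induction on the level: coveredness supplies, for every atom of `S`,
a rule whose body atoms lie in `S` and have smaller level.

For part (a), suppose `a ∈ S` is not in `M_P`. Fix, for every atom of `S`, a rule covering it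
and resolve, starting from the query `a`, always with these rules. Every query stays inside `S`,
and it always contains an atom outside `M_P`: if the selected atom is outside `M_P`, so is one of
the atoms of the body replacing it. Hence the derivation never stops. It is made fair by always
selecting the oldest atom: while an atom introduced at step `t` waits, each step removes one atom
introduced at a step `≤ t` and adds only younger ones, which can happen only finitely often.
-/

/-- A rule (ground instance of a program clause): a head atom and a list of body atoms. -/
structure GroundRule (α : Type) where
  head : α
  body : List α

/-- The least Herbrand model of a (ground) definite program `P`: the least set of
ground atoms closed under the immediate consequence operator. -/
inductive LHM {α : Type} (P : Set (GroundRule α)) : α → Prop where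
  | intro (r : GroundRule α) (hr : r ∈ P) (hb : ∀ b ∈ r.body, LHM P b) : LHM P r.head

/-- A ground atom `A` is covered by program `P` w.r.t. specification `S`:
there is a ground rule instance with head `A` and all body atoms in `S`. -/
def Covered {α : Type} (P : Set (GroundRule α)) (S : Set α) (A : α) : Prop :=
  ∃ r ∈ P, r.head = A ∧ ∀ b ∈ r.body, b ∈ S

/-- `P` is recurrent w.r.t. the level mapping `lvl`: in every ground rule instance
the level of the head strictly exceeds the level of each body atom. -/
def Recurrent {α : Type} (P : Set (GroundRule α)) (lvl : α → ℕ) : Prop :=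
  ∀ r ∈ P, ∀ b ∈ r.body, lvl b < lvl r.head

/-- An infinite (ground) SLD-derivation for program `P`, with explicit selection:
at step `n` the query `q n = pre n ++ (rule n).head :: post n`, the selected atom
(at position `(pre n).length`) is resolved using rule `rule n`. -/
structure InfDeriv {α : Type} (P : Set (GroundRule α)) where
  q : ℕ → List α
  pre : ℕ → List α
  rule : ℕ → GroundRule α
  post : ℕ → List α
  mem : ∀ n, rule n ∈ P
  eq1 : ∀ n, q n = pre n ++ (rule n).head :: post n
  eq2 : ∀ n, q (n + 1) = pre n ++ (rule n).body ++ post n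

/-- An atom occurrence (traced through the derivation from step `n` by the index
function `g`) which is never selected. -/
def UnselectedThread {α : Type} {P : Set (GroundRule α)} (D : InfDeriv P)
    (n : ℕ) (g : ℕ → ℕ) : Prop :=
  ∀ k, g k < (D.q (n + k)).length ∧ g k ≠ (D.pre (n + k)).length ∧
    g (k + 1) = if g k < (D.pre (n + k)).length then g k
                else g k - 1 + (D.rule (n + k)).body.length

/-- A fair infinite derivation: no atom occurrence stays forever unselected. -/
def FairDeriv {α : Type} {P : Set (GroundRule α)} (D : InfDeriv P) : Prop :=
  ¬ ∃ n g, UnselectedThread D n g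

def IsCoveringChoice {α : Type} (P : Set (GroundRule α)) (S : Set α) (pick : α → GroundRule α) :
    Prop :=
  ∀ A ∈ S, pick A ∈ P ∧ (pick A).head = A ∧ ∀ b ∈ (pick A).body, b ∈ S

lemma exists_isCoveringChoice {α : Type} {P : Set (GroundRule α)} {S : Set α}
    (hcov : ∀ A ∈ S, Covered P S A) : ∃ pick, IsCoveringChoice P S pick := by
  classical
  exact ⟨fun A => if h : A ∈ S then (hcov A h).choose else ⟨A, []⟩, fun A hA => by
    simpa only [dif_pos hA] using (hcov A hA).choose_spec⟩

lemma exists_mem_body_not_LHM {α : Type} {P : Set (GroundRule α)} {r : GroundRule α}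
    (hr : r ∈ P) (hhead : ¬ LHM P r.head) : ∃ b ∈ r.body, ¬ LHM P b := by
  by_contra! hbody
  exact hhead (LHM.intro r hr hbody)

theorem LHM_of_recurrent {α : Type} {P : Set (GroundRule α)} {S : Set α} {lvl : α → ℕ}
    (hcov : ∀ A ∈ S, Covered P S A) (hrec : Recurrent P lvl) : ∀ a ∈ S, LHM P a := by
  intro a ha
  induction hlvl : lvl a using Nat.strong_induction_on generalizing a with
  | _ n ih =>
    obtain ⟨r, hr, rfl, hbody⟩ := hcov a ha
    exact LHM.intro r hr fun b hb => ih (lvl b) (hlvl ▸ hrec r hr b hb) b (hbody b hb) rfl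

namespace OldestFirst

variable {α : Type}

/-- Queries are kept as lists of atoms tagged with the step at which they were introduced;
the selected atom is the leftmost one with the least tag. -/
def oldestIdx (l : List (α × ℕ)) : ℕ :=
  l.findIdx fun e => l.all fun e' => e.2 ≤ e'.2

lemma oldestIdx_lt_length {l : List (α × ℕ)} (hl : l ≠ []) : oldestIdx l < l.length := by
  obtain ⟨e, he, hmin⟩ := Set.exists_min_image {x | x ∈ l} Prod.snd (List.finite_toSet l)
    (List.exists_mem_of_ne_nil l hl)
  exact List.findIdx_lt_length_of_exists ⟨e, he, by simpa using hmin⟩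

lemma snd_getElem_oldestIdx_le {l : List (α × ℕ)} (h : oldestIdx l < l.length) :
    ∀ e ∈ l, l[oldestIdx l].2 ≤ e.2 := by
  have hmin := List.findIdx_getElem (w := h)
  simp only [List.all_eq_true, decide_eq_true_eq] at hmin
  exact hmin

lemma eq_take_oldestIdx_append {l : List (α × ℕ)} (h : oldestIdx l < l.length) :
    l = l.take (oldestIdx l) ++ l[oldestIdx l] :: l.drop (oldestIdx l + 1) := by
  rw [← List.drop_eq_getElem_cons h, List.take_append_drop]

variable (pick : α → GroundRule α)

def resolveOldest (m : ℕ) (l : List (α × ℕ)) : List (α × ℕ) :=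
  if h : oldestIdx l < l.length then
    l.take (oldestIdx l) ++ (pick l[oldestIdx l].1).body.map (·, m + 1) ++
      l.drop (oldestIdx l + 1)
  else []

variable {pick}

lemma mem_resolveOldest {m : ℕ} {l : List (α × ℕ)} {e : α × ℕ}
    (he : e ∈ resolveOldest pick m l) :
    ∃ h : oldestIdx l < l.length,
      e ∈ l ∨ e.1 ∈ (pick l[oldestIdx l].1).body ∧ e.2 = m + 1 := by
  unfold resolveOldest at he
  split_ifs at he with h
  · refine ⟨h, ?_⟩
    simp only [List.mem_append, List.mem_map] at he
    rcases he with (he | ⟨b, hb, rfl⟩) | he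
    · exact .inl (List.mem_of_mem_take he)
    · exact .inr ⟨hb, rfl⟩
    · exact .inl (List.mem_of_mem_drop he)
  · simp at he

/-- The index shift is the one prescribed by `UnselectedThread`. -/
lemma getElem?_resolveOldest {m : ℕ} {l : List (α × ℕ)} (h : oldestIdx l < l.length)
    {j : ℕ} (hj : j ≠ oldestIdx l) :
    (resolveOldest pick m l)[if j < oldestIdx l then j
      else j - 1 + (pick l[oldestIdx l].1).body.length]? = l[j]? := by
  have htake : (l.take (oldestIdx l)).length = oldestIdx l := List.length_take_of_le h.le
  rw [resolveOldest, dif_pos h]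
  split_ifs with hlt
  · rw [List.append_assoc, List.getElem?_append_left (by omega), List.getElem?_take,
      if_pos hlt]
  · rw [List.getElem?_append_right (by simp only [List.length_append, List.length_map]; omega),
      List.getElem?_drop]
    congr 1
    simp only [List.length_append, List.length_map]
    omega

lemma countP_resolveOldest_lt {m t : ℕ} {l : List (α × ℕ)} (h : oldestIdx l < l.length)
    (hsel : l[oldestIdx l].2 ≤ t) (ht : t ≤ m) :
    (resolveOldest pick m l).countP (·.2 ≤ t) < l.countP (·.2 ≤ t) := by
  have hnew : ((pick l[oldestIdx l].1).body.map (·, m + 1)).countP (·.2 ≤ t) = 0 := by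
    simp only [List.countP_eq_zero, List.mem_map]
    rintro _ ⟨b, -, rfl⟩
    simpa using ht
  conv_rhs => rw [eq_take_oldestIdx_append h]
  rw [resolveOldest, dif_pos h, List.countP_append, List.countP_append, hnew,
    List.countP_append, List.countP_cons_of_pos (by simpa using hsel)]
  omega

lemma exists_not_LHM_resolveOldest {P : Set (GroundRule α)} {m : ℕ} {l : List (α × ℕ)}
    (hpick : ∀ e ∈ l, pick e.1 ∈ P ∧ (pick e.1).head = e.1)
    (hl : ∃ e ∈ l, ¬ LHM P e.1) : ∃ e ∈ resolveOldest pick m l, ¬ LHM P e.1 := by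
  obtain ⟨e, he, hne⟩ := hl
  have h : oldestIdx l < l.length := oldestIdx_lt_length (List.ne_nil_of_mem he)
  have hmem : ∀ e' ∈ l.take (oldestIdx l) ++ l.drop (oldestIdx l + 1),
      e' ∈ resolveOldest pick m l := by
    intro e' he'
    rw [resolveOldest, dif_pos h]
    simp only [List.mem_append] at he' ⊢
    tauto
  rw [eq_take_oldestIdx_append h, List.mem_append, List.mem_cons] at he
  rcases he with he | rfl | he
  · exact ⟨e, hmem e (List.mem_append_left _ he), hne⟩
  · obtain ⟨hP, hhead⟩ := hpick _ (List.getElem_mem h)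
    obtain ⟨b, hb, hbne⟩ := exists_mem_body_not_LHM hP (by rwa [hhead])
    refine ⟨(b, m + 1), ?_, hbne⟩
    rw [resolveOldest, dif_pos h]
    exact List.mem_append_left _ (List.mem_append_right _ (List.mem_map_of_mem hb))
  · exact ⟨e, hmem e (List.mem_append_right _ he), hne⟩

variable (pick)

def query (a : α) : ℕ → List (α × ℕ)
  | 0 => [(a, 0)]
  | n + 1 => resolveOldest pick n (query a n)

variable {pick}

lemma snd_le_of_mem_query {a : α} {n : ℕ} {e : α × ℕ} (he : e ∈ query pick a n) :
    e.2 ≤ n := by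
  induction n generalizing e with
  | zero => simp_all [query]
  | succ n ih =>
    obtain ⟨-, he | ⟨-, hnew⟩⟩ := mem_resolveOldest he
    · exact (ih he).trans n.le_succ
    · exact hnew.le

variable {P : Set (GroundRule α)} {S : Set α} {a : α}

lemma fst_mem_of_mem_query (hpick : IsCoveringChoice P S pick) (ha : a ∈ S) {n : ℕ}
    {e : α × ℕ} (he : e ∈ query pick a n) : e.1 ∈ S := by
  induction n generalizing e with
  | zero => simp_all [query]
  | succ n ih =>
    obtain ⟨h, he | ⟨hb, -⟩⟩ := mem_resolveOldest he
    · exact ih he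
    · exact (hpick _ (ih (List.getElem_mem h))).2.2 _ hb

lemma exists_not_LHM_query (hpick : IsCoveringChoice P S pick) (ha : a ∈ S)
    (hna : ¬ LHM P a) (n : ℕ) : ∃ e ∈ query pick a n, ¬ LHM P e.1 := by
  induction n with
  | zero => exact ⟨(a, 0), List.mem_singleton_self _, hna⟩
  | succ n ih =>
    refine exists_not_LHM_resolveOldest (fun e he => ?_) ih
    obtain ⟨hP, hhead, -⟩ := hpick _ (fst_mem_of_mem_query hpick ha he)
    exact ⟨hP, hhead⟩

lemma oldestIdx_query_lt_length (hpick : IsCoveringChoice P S pick) (ha : a ∈ S)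
    (hna : ¬ LHM P a) (n : ℕ) : oldestIdx (query pick a n) < (query pick a n).length := by
  obtain ⟨e, he, -⟩ := exists_not_LHM_query hpick ha hna n
  exact oldestIdx_lt_length (List.ne_nil_of_mem he)

def infDeriv (hpick : IsCoveringChoice P S pick) (ha : a ∈ S) (hna : ¬ LHM P a) : InfDeriv P where
  q n := (query pick a n).map Prod.fst
  pre n := ((query pick a n).take (oldestIdx (query pick a n))).map Prod.fst
  rule n := pick ((query pick a n)[oldestIdx (query pick a n)]'
    (oldestIdx_query_lt_length hpick ha hna n)).1
  post n := ((query pick a n).drop (oldestIdx (query pick a n) + 1)).map Prod.fst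
  mem n := (hpick _ (fst_mem_of_mem_query hpick ha (List.getElem_mem _))).1
  eq1 n := by
    rw [(hpick _ (fst_mem_of_mem_query hpick ha (List.getElem_mem _))).2.1,
      ← List.map_cons, ← List.map_append, ← eq_take_oldestIdx_append]
  eq2 n := by
    simp only [query, resolveOldest, dif_pos (oldestIdx_query_lt_length hpick ha hna n),
      List.map_append, List.map_map, Function.comp_def, List.map_id']

lemma infDeriv_q_subset (hpick : IsCoveringChoice P S pick) (ha : a ∈ S) (hna : ¬ LHM P a)
    (n : ℕ) : ∀ x ∈ (infDeriv hpick ha hna).q n, x ∈ S := by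
  intro x hx
  obtain ⟨e, he, rfl⟩ := List.mem_map.1 hx
  exact fst_mem_of_mem_query hpick ha he

theorem infDeriv_fair (hpick : IsCoveringChoice P S pick) (ha : a ∈ S) (hna : ¬ LHM P a) :
    FairDeriv (infDeriv hpick ha hna) := by
  rintro ⟨n, g, hg⟩
  set L : ℕ → List (α × ℕ) := fun k => query pick a (n + k) with hL
  have hlt (k : ℕ) : oldestIdx (L k) < (L k).length :=
    oldestIdx_query_lt_length hpick ha hna (n + k)
  have hpre (k : ℕ) : ((infDeriv hpick ha hna).pre (n + k)).length = oldestIdx (L k) := by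
    simpa [infDeriv, hL] using (hlt k).le
  have hg0 : g 0 < (L 0).length := by simpa [infDeriv, hL] using (hg 0).1
  set e := (L 0)[g 0] with he
  have hthread (k : ℕ) : (L k)[g k]? = some e := by
    induction k with
    | zero => exact List.getElem?_eq_getElem hg0
    | succ k ih =>
      obtain ⟨-, hsel, hnext⟩ := hg k
      rw [hpre] at hsel hnext
      rw [← ih, hnext]
      exact getElem?_resolveOldest (hlt k) hsel
  have he_mem (k : ℕ) : e ∈ L k := List.mem_of_getElem? (hthread k)
  have htag : e.2 ≤ n := snd_le_of_mem_query (he_mem 0)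
  have hdecr (k : ℕ) : (L (k + 1)).countP (·.2 ≤ e.2) < (L k).countP (·.2 ≤ e.2) :=
    countP_resolveOldest_lt (hlt k) (snd_getElem_oldestIdx_le (hlt k) e (he_mem k))
      (htag.trans (Nat.le_add_right n k))
  obtain ⟨k, hk⟩ := WellFounded.not_rel_apply_succ (r := (· < ·))
    fun k => (L k).countP (·.2 ≤ e.2)
  exact hk (hdecr k)

end OldestFirst

/-- Completeness via coveredness and termination: if every atom of `S` is covered by `P`
w.r.t. `S`, then (a) if there is no infinite fair derivation starting from a ground query
consisting of atoms of `S`, every atom of `S` is in `M_P` (`P` is complete w.r.t. `S`);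
in particular (b) if `P` is recurrent w.r.t. some level mapping then `S ⊆ M_P`. -/
theorem covered_terminating_implies_complete {α : Type}
    (P : Set (GroundRule α)) (S : Set α)
    (hcov : ∀ A ∈ S, Covered P S A) :
    ((¬ ∃ D : InfDeriv P, FairDeriv D ∧ ∀ a ∈ D.q 0, a ∈ S) → ∀ a ∈ S, LHM P a) ∧
    ((∃ lvl : α → ℕ, Recurrent P lvl) → ∀ a ∈ S, LHM P a) := by
  refine ⟨fun hterm a ha => ?_, fun ⟨lvl, hrec⟩ => LHM_of_recurrent hcov hrec⟩
  by_contra hna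
  obtain ⟨pick, hpick⟩ := exists_isCoveringChoice hcov
  exact hterm ⟨OldestFirst.infDeriv hpick ha hna, OldestFirst.infDeriv_fair hpick ha hna,
    OldestFirst.infDeriv_q_subset hpick ha hna 0⟩
end

section
/- Let P be a definite clause program that is recurrent w.r.t. a level mapping | · | : ground atoms → ℕ, and let S be a Herbrand interpretation such that every atom of S is covered by P w.r.t. S. Then S ⊆ M_P, the least Herbrand model of P. -/
/-- If `P` is recurrent w.r.t. a level mapping and every atom of `S` is covered by `P`
w.r.t. `S`, then `S ⊆ M_P`. -/
theorem recurrent_covered_implies_complete {α : Type}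
    (P : Set (GroundRule α)) (S : Set α) (lvl : α → ℕ)
    (hrec : Recurrent P lvl)
    (hcov : ∀ A ∈ S, Covered P S A) :
    ∀ a ∈ S, LHM P a := by
  have main : ∀ n a, a ∈ S → lvl a = n → LHM P a := by
    intro n
    induction n using Nat.strong_induction_on with
    | _ n ih =>
      intro a ha hn
      obtain ⟨r, hrP, hhd, hb⟩ := hcov a ha
      subst hhd
      exact LHM.intro r hrP fun b hbmem =>
        ih (lvl b) (hn ▸ hrec r hrP b hbmem) b (hb b hbmem) rfl
  exact fun a ha => main (lvl a) a ha rfl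
end

section
/- If every atom of a specification S is covered by a definite clause program P w.r.t. S, and moreover there is a well-founded relation ≺ on ground atoms such that every atom A ∈ S is covered by a ground rule instance A ← B₁,…,Bₙ with each Bᵢ ∈ S and Bᵢ ≺ A, then S ⊆ M_P. -/
/-- If every atom of `S` is covered by `P` w.r.t. `S`, and moreover there is a
well-founded relation `≺` on ground atoms such that every `A ∈ S` is covered by a
ground rule instance whose body atoms are in `S` and `≺`-smaller than `A`,
then `S ⊆ M_P`. -/
theorem covered_wf_implies_complete {α : Type}
    (P : Set (GroundRule α)) (S : Set α)
    (prec : α → α → Prop) (hwf : WellFounded prec)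
    (hcov : ∀ A ∈ S, Covered P S A)
    (hcov' : ∀ A ∈ S, ∃ r ∈ P, r.head = A ∧ ∀ b ∈ r.body, b ∈ S ∧ prec b A) :
    ∀ a ∈ S, LHM P a := by
  intro a ha
  induction a using hwf.induction with
  | _ a ih =>
    obtain ⟨r, hrP, hrh, hrb⟩ := hcov' a ha
    subst hrh
    exact LHM.intro r hrP (fun b hb => ih b (hrb b hb).2 (hrb b hb).1)
end

section
/- The least Herbrand model of the program P₁ = { sat_cnf([]). ; sat_cnf([C|Cs]) ← sat_cl(C), sat_cnf(Cs). ; sat_cl([P-V|Ps]) ← P = V. ; sat_cl([H|Ps]) ← sat_cl(Ps). ; X = X. } restricted to atoms for sat_cl is exactly { sat_cl(s) : s ∈ L₁ }, where L₁ is the set of ground terms of the form [t₁,…,tₙ|s] with n > 0 and tᵢ = t-t for some i ∈ {1,…,n} and some ground term t. -/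
/-- Ground terms over an alphabet with the list constructors `[]` and cons, the binary
pairing symbol `-`, the constants `true` and `false`, and infinitely many other
function symbols of each arity (`fn k [t₁,…,tₙ]` is the `k`-th other symbol of arity `n`). -/
inductive Tm : Type where
  | nil : Tm
  | cons : Tm → Tm → Tm
  | pair : Tm → Tm → Tm
  | tt : Tm
  | ff : Tm
  | fn : ℕ → List Tm → Tm

/-- Ground atoms for the predicates used in the paper's programs. -/
inductive Atom : Type where
  | sat_cnf : Tm → Atom
  | sat_cl : Tm → Atom
  | eq : Tm → Tm → Atom
  | sat_cl3 : Tm → Tm → Tm → Atom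
  | sat_cl5 : Tm → Tm → Tm → Tm → Tm → Atom
  | sat_cl5a : Tm → Tm → Tm → Tm → Tm → Atom
  | sat : Tm → Tm → Atom
  | tflist : Tm → Atom
  | tf : Tm → Atom

/-- `L₁`: ground terms of the form `[t₁,…,tₙ|s]`, `n > 0`, where some `tᵢ` is `t-t`. -/
inductive L1 : Tm → Prop where
  | here (u s : Tm) : L1 (.cons (.pair u u) s)
  | there (t s : Tm) : L1 s → L1 (.cons t s)

/-- `L₂`: ground lists all of whose elements are in `L₁`. -/
inductive L2 : Tm → Prop where
  | nil : L2 .nil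
  | cons (h t : Tm) : L1 h → L2 t → L2 (.cons h t)

/-- Ground lists all of whose elements are pairs `t-u`. -/
inductive PairList : Tm → Prop where
  | nil : PairList .nil
  | cons (t u s : Tm) : PairList s → PairList (.cons (.pair t u) s)

/-- `L₁⁰`: ground lists `[t₁-u₁,…,tₙ-uₙ]`, `n > 0`, with `tⱼ = uⱼ` for some `j`. -/
inductive L1o : Tm → Prop where
  | here (u s : Tm) : PairList s → L1o (.cons (.pair u u) s)
  | there (t u s : Tm) : L1o s → L1o (.cons (.pair t u) s)

/-- `L₂⁰`: ground lists all of whose elements are in `L₁⁰`. -/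
inductive L2o : Tm → Prop where
  | nil : L2o .nil
  | cons (h t : Tm) : L1o h → L2o t → L2o (.cons h t)

/-- The ground instances of the rules of program `P₁`:
`sat_cnf([]).` ; `sat_cnf([C|Cs]) ← sat_cl(C), sat_cnf(Cs).` ;
`sat_cl([P-V|Ps]) ← P = V.` ; `sat_cl([H|Ps]) ← sat_cl(Ps).` ; `X = X.` -/
def P1 : Set (GroundRule Atom) :=
  { r | r = ⟨.sat_cnf .nil, []⟩
      ∨ (∃ c cs, r = ⟨.sat_cnf (.cons c cs), [.sat_cl c, .sat_cnf cs]⟩)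
      ∨ (∃ p v ps, r = ⟨.sat_cl (.cons (.pair p v) ps), [.eq p v]⟩)
      ∨ (∃ h ps, r = ⟨.sat_cl (.cons h ps), [.sat_cl ps]⟩)
      ∨ (∃ x, r = ⟨.eq x x, []⟩) }

lemma LHM_P1_eq : ∀ a, LHM P1 a → ∀ p v, a = .eq p v → p = v := by
  intro a h
  induction h with
  | intro r hr hb ih =>
    intro p v hs
    rcases hr with h1 | ⟨c, cs, h2⟩ | ⟨p', v', ps, h3⟩ | ⟨hh, ps, h4⟩ | ⟨x, h5⟩ <;>
      subst_vars <;> simp_all <;> aesop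

lemma LHM_P1_forward : ∀ a, LHM P1 a → ∀ s, a = .sat_cl s → L1 s := by
  intro a h
  induction h with
  | intro r hr hb ih =>
    intro s hs
    rcases hr with h1 | ⟨c, cs, h2⟩ | ⟨p, v, ps, h3⟩ | ⟨hh, ps, h4⟩ | ⟨x, h5⟩
    · subst h1; simp at hs
    · subst h2; simp at hs
    · subst h3
      have heq : LHM P1 (.eq p v) := hb _ (by simp)
      have hpv : p = v := LHM_P1_eq _ heq p v rfl
      subst hpv
      simp only [Atom.sat_cl.injEq] at hs
      rw [← hs]
      exact L1.here p ps
    · subst h4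
      simp only [Atom.sat_cl.injEq] at hs
      rw [← hs]
      exact L1.there hh ps (ih _ (by simp) ps rfl)
    · subst h5; simp at hs

/-- The least Herbrand model of `P₁` restricted to atoms for `sat_cl` is exactly
`{ sat_cl(s) : s ∈ L₁ }`. -/
theorem P1_sat_cl_defines_L1 :
    ∀ s : Tm, LHM P1 (.sat_cl s) ↔ L1 s := by
  intro s
  constructor
  · intro h; exact LHM_P1_forward _ h s rfl
  · intro h
    induction h with
    | here u s =>
      refine LHM.intro (⟨Atom.sat_cl (.cons (.pair u u) s), [Atom.eq u u]⟩ : GroundRule Atom) ?_ ?_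
      · show _ ∈ P1
        exact Or.inr (Or.inr (Or.inl ⟨u, u, s, rfl⟩))
      · intro b hb; simp at hb; subst hb
        exact LHM.intro (⟨Atom.eq u u, []⟩ : GroundRule Atom) (show _ ∈ P1 from Or.inr (Or.inr (Or.inr (Or.inr ⟨u, rfl⟩)))) (by simp)
    | there t s _ ih =>
      refine LHM.intro (⟨Atom.sat_cl (.cons t s), [Atom.sat_cl s]⟩ : GroundRule Atom) ?_ ?_
      · show _ ∈ P1
        exact Or.inr (Or.inr (Or.inr (Or.inl ⟨t, s, rfl⟩)))
      · intro b hb; simp at hb; subst hb; exact ih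
end

section
/- The least Herbrand model of the program P₁ (as above) restricted to atoms for sat_cnf is exactly { sat_cnf(t) : t ∈ L₂ }, where L₂ is the set of ground lists all of whose elements belong to L₁, and L₁ is the set of ground terms [t₁,…,tₙ|s], n > 0, with tᵢ = t-t for some i and some ground term t. (That is, P₁ is both correct and complete w.r.t. the specification S₁.) -/
lemma lhm_aux : ∀ a, LHM P1 a →
    (∀ t, a = .sat_cnf t → L2 t) ∧ (∀ t, a = .sat_cl t → L1 t) ∧
    (∀ x y, a = .eq x y → x = y) := by
  intro a h
  induction h with
  | intro r hr hb ih =>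
    rcases hr with h1 | ⟨c, cs, h1⟩ | ⟨p, v, ps, h1⟩ | ⟨hh, ps, h1⟩ | ⟨x, h1⟩ <;> subst h1 <;>
      simp only at * <;> refine ⟨?_, ?_, ?_⟩
    · intro u hu; cases hu; exact L2.nil
    · intro u hu; cases hu
    · intro x y hu; cases hu
    · intro u hu; cases hu
      exact L2.cons c cs ((ih _ (by simp)).2.1 c rfl) ((ih _ (by simp)).1 cs rfl)
    · intro u hu; cases hu
    · intro x y hu; cases hu
    · intro u hu; cases hu
    · intro u hu; cases hu
      have := (ih _ (by simp)).2.2 p v rfl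
      subst this
      exact L1.here p ps
    · intro x y hu; cases hu
    · intro u hu; cases hu
    · intro u hu; cases hu
      exact L1.there hh ps ((ih _ (by simp)).2.1 ps rfl)
    · intro x y hu; cases hu
    · intro u hu; cases hu
    · intro u hu; cases hu
    · rintro x y ⟨rfl, rfl⟩; rfl

lemma lhm_eq (x : Tm) : LHM P1 (.eq x x) :=
  LHM.intro (P := P1) ⟨.eq x x, []⟩ (Or.inr (Or.inr (Or.inr (Or.inr ⟨x, rfl⟩)))) (by simp)

lemma lhm_satcl {t : Tm} (h : L1 t) : LHM P1 (.sat_cl t) := by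
  induction h with
  | here u s =>
    exact LHM.intro (P := P1) ⟨.sat_cl (.cons (.pair u u) s), [.eq u u]⟩
      (Or.inr (Or.inr (Or.inl ⟨u, u, s, rfl⟩)))
      (by rintro b hb; simp at hb; subst hb; exact lhm_eq u)
  | there t s _ ih =>
    exact LHM.intro (P := P1) ⟨.sat_cl (.cons t s), [.sat_cl s]⟩
      (Or.inr (Or.inr (Or.inr (Or.inl ⟨t, s, rfl⟩))))
      (by rintro b hb; simp at hb; subst hb; exact ih)

/-- The least Herbrand model of `P₁` restricted to atoms for `sat_cnf` is exactly
`{ sat_cnf(t) : t ∈ L₂ }` (correctness and completeness of `P₁` w.r.t. `S₁` for `sat_cnf`). -/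
theorem P1_sat_cnf_defines_L2 :
    ∀ t : Tm, LHM P1 (.sat_cnf t) ↔ L2 t := by
  intro t
  constructor
  · intro h; exact (lhm_aux _ h).1 t rfl
  · intro h
    induction h with
    | nil => exact LHM.intro (P := P1) ⟨.sat_cnf .nil, []⟩ (Or.inl rfl) (by simp)
    | cons hd tl h1 _ ih =>
      exact LHM.intro (P := P1) ⟨.sat_cnf (.cons hd tl), [.sat_cl hd, .sat_cnf tl]⟩
        (Or.inr (Or.inl ⟨hd, tl, rfl⟩))
        (by rintro b hb; simp at hb
            rcases hb with rfl | rfl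
            · exact lhm_satcl h1
            · exact ih)
end

section
/- A clause represented as a ground list f of pairs is true under an assignment represented by a substitution θ iff fθ ∈ L₁; consequently, a CNF formula represented as a list t of such clause representations is satisfiable iff t has a ground instance in L₂. Moreover, for any set L₂' with L₂⁰ ⊆ L₂' ⊆ L₂, t is satisfiable iff t has a ground instance in L₂', where L₂⁰ is the set of lists of elements of L₁⁰ and L₁⁰ = { [t₁-u₁,…,tₙ-uₙ] : n > 0, all tᵢ, uᵢ ground, tⱼ = uⱼ for some j }. -/
/-- Terms possibly containing variables (over the same alphabet, without the
`other` function symbols, which do not occur in representations of formulae). -/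
inductive TmV : Type where
  | var : ℕ → TmV
  | nil : TmV
  | cons : TmV → TmV → TmV
  | pair : TmV → TmV → TmV
  | tt : TmV
  | ff : TmV

/-- Applying a (ground) substitution to a term. -/
def subst (θ : ℕ → Tm) : TmV → Tm
  | .var x => θ x
  | .nil => .nil
  | .cons h t => .cons (subst θ h) (subst θ t)
  | .pair a b => .pair (subst θ a) (subst θ b)
  | .tt => .tt
  | .ff => .ff

/-- The constant representing a truth value. -/
def boolTm (b : Bool) : Tm := if b then .tt else .ff

/-- Ditto, as a term with variables. -/
def boolTmV (b : Bool) : TmV := if b then .tt else .ff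

/-- A propositional literal `(b, x)` (polarity `b`, variable `x`) is represented
as the pair `b-X`. -/
def repLit (l : Bool × ℕ) : TmV := .pair (boolTmV l.1) (.var l.2)

/-- A propositional clause is represented as the list of representations of its literals. -/
def repClause (c : List (Bool × ℕ)) : TmV :=
  c.foldr (fun l t => .cons (repLit l) t) .nil

/-- A CNF formula is represented as the list of representations of its clauses. -/
def repCNF (F : List (List (Bool × ℕ))) : TmV :=
  F.foldr (fun c t => .cons (repClause c) t) .nil

/-- A clause is true under an assignment iff some of its literals has the assigned value. -/
def clauseTrue (σ : ℕ → Bool) (c : List (Bool × ℕ)) : Prop :=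
  ∃ l ∈ c, σ l.2 = l.1

/-- A CNF formula is satisfiable iff some assignment makes all its clauses true. -/
def satisfiable (F : List (List (Bool × ℕ))) : Prop :=
  ∃ σ : ℕ → Bool, ∀ c ∈ F, clauseTrue σ c

def Tm.toBool : Tm → Bool
  | .tt => true
  | _ => false

@[simp]
lemma Tm.toBool_boolTm (b : Bool) : (boolTm b).toBool = b := by
  cases b <;> rfl

lemma boolTm_injective : Function.Injective boolTm :=
  Function.LeftInverse.injective Tm.toBool_boolTm

@[simp]
lemma subst_boolTmV (θ : ℕ → Tm) (b : Bool) : subst θ (boolTmV b) = boolTm b := by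
  cases b <;> rfl

@[simp]
lemma subst_repClause_nil (θ : ℕ → Tm) : subst θ (repClause []) = .nil := rfl

@[simp]
lemma subst_repClause_cons (θ : ℕ → Tm) (l : Bool × ℕ) (c : List (Bool × ℕ)) :
    subst θ (repClause (l :: c)) = .cons (.pair (boolTm l.1) (θ l.2)) (subst θ (repClause c)) := by
  simp [repClause, repLit, subst]

@[simp]
lemma subst_repCNF_nil (θ : ℕ → Tm) : subst θ (repCNF []) = .nil := rfl

@[simp]
lemma subst_repCNF_cons (θ : ℕ → Tm) (c : List (Bool × ℕ)) (F : List (List (Bool × ℕ))) :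
    subst θ (repCNF (c :: F)) = .cons (subst θ (repClause c)) (subst θ (repCNF F)) := rfl

@[simp]
lemma not_L1_nil : ¬ L1 .nil := nofun

@[simp]
lemma L1_cons_iff {a s : Tm} : L1 (.cons a s) ↔ (∃ u, a = .pair u u) ∨ L1 s := by
  constructor
  · rintro (⟨u, s⟩ | ⟨_, _, h⟩)
    · exact Or.inl ⟨u, rfl⟩
    · exact Or.inr h
  · rintro (⟨u, rfl⟩ | h)
    · exact L1.here u s
    · exact L1.there a s h

@[simp]
lemma L2_cons_iff {a s : Tm} : L2 (.cons a s) ↔ L1 a ∧ L2 s := by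
  constructor
  · intro h
    cases h with
    | cons _ _ ha hs => exact ⟨ha, hs⟩
  · rintro ⟨ha, hs⟩
    exact L2.cons a s ha hs

lemma L1o_of_L1 {s : Tm} (hp : PairList s) (h : L1 s) : L1o s := by
  induction h with
  | here u s =>
    cases hp with
    | cons _ _ _ hs => exact L1o.here u s hs
  | there t s _ ih =>
    cases hp with
    | cons a b _ hs => exact L1o.there a b s (ih hs)

lemma pairList_subst_repClause (θ : ℕ → Tm) (c : List (Bool × ℕ)) :
    PairList (subst θ (repClause c)) := by
  induction c with
  | nil => exact PairList.nil
  | cons l c ih => simpa using PairList.cons _ _ _ ih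

lemma L1_subst_repClause_iff (θ : ℕ → Tm) (c : List (Bool × ℕ)) :
    L1 (subst θ (repClause c)) ↔ ∃ l ∈ c, θ l.2 = boolTm l.1 := by
  induction c with
  | nil => simp
  | cons l c ih => simp [ih, eq_comm]

lemma L2_subst_repCNF_iff (θ : ℕ → Tm) (F : List (List (Bool × ℕ))) :
    L2 (subst θ (repCNF F)) ↔ ∀ c ∈ F, L1 (subst θ (repClause c)) := by
  induction F with
  | nil => simp [L2.nil]
  | cons c F ih => simp [ih]

lemma L2o_of_L2_subst_repCNF (θ : ℕ → Tm) (F : List (List (Bool × ℕ)))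
    (h : L2 (subst θ (repCNF F))) : L2o (subst θ (repCNF F)) := by
  induction F with
  | nil => exact L2o.nil
  | cons c F ih =>
    rw [subst_repCNF_cons, L2_cons_iff] at h
    exact L2o.cons _ _ (L1o_of_L1 (pairList_subst_repClause θ c) h.1) (ih h.2)

lemma clauseTrue_iff_L1 (σ : ℕ → Bool) (c : List (Bool × ℕ)) :
    clauseTrue σ c ↔ L1 (subst (fun x => boolTm (σ x)) (repClause c)) := by
  simp only [L1_subst_repClause_iff, boolTm_injective.eq_iff, clauseTrue]

lemma satisfiable_iff_exists_L2 (F : List (List (Bool × ℕ))) :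
    satisfiable F ↔ ∃ θ : ℕ → Tm, L2 (subst θ (repCNF F)) := by
  constructor
  · rintro ⟨σ, hσ⟩
    exact ⟨fun x => boolTm (σ x),
      (L2_subst_repCNF_iff _ F).2 fun c hc => (clauseTrue_iff_L1 σ c).1 (hσ c hc)⟩
  · rintro ⟨θ, hθ⟩
    refine ⟨fun x => (θ x).toBool, fun c hc => ?_⟩
    obtain ⟨l, hl, hθl⟩ := (L1_subst_repClause_iff θ c).1 ((L2_subst_repCNF_iff θ F).1 hθ c hc)
    exact ⟨l, hl, by simp [hθl]⟩

/-- A represented clause is true under an assignment (represented by a substitution `θ`)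
iff its instance under `θ` is in `L₁`; consequently a CNF formula is satisfiable iff its
representation has a ground instance in `L₂`; moreover for any `L₂'` with
`L₂⁰ ⊆ L₂' ⊆ L₂`, it is satisfiable iff its representation has a ground instance in `L₂'`. -/
theorem satisfiability_via_L2 :
    (∀ (σ : ℕ → Bool) (c : List (Bool × ℕ)),
        clauseTrue σ c ↔ L1 (subst (fun x => boolTm (σ x)) (repClause c))) ∧
    (∀ F : List (List (Bool × ℕ)),
        satisfiable F ↔ ∃ θ : ℕ → Tm, L2 (subst θ (repCNF F))) ∧
    (∀ L2' : Set Tm, (∀ t, L2o t → t ∈ L2') → (∀ t ∈ L2', L2 t) →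
        ∀ F : List (List (Bool × ℕ)),
          satisfiable F ↔ ∃ θ : ℕ → Tm, subst θ (repCNF F) ∈ L2') := by
  refine ⟨clauseTrue_iff_L1, satisfiable_iff_exists_L2, fun L2' hL2o hL2 F => ?_⟩
  rw [satisfiable_iff_exists_L2]
  constructor
  · rintro ⟨θ, hθ⟩
    exact ⟨θ, hL2o _ (L2o_of_L2_subst_repCNF θ F hθ)⟩
  · rintro ⟨θ, hθ⟩
    exact ⟨θ, hL2 _ hθ⟩
end

section
/- The program P₃ is recurrent w.r.t. the level mapping: |sat(t,u)| = max(3|t|, listsize(u)) + 2, |sat_cnf(t)| = |sat_cl(t)| = 3|t| + 1, |sat_cl3(t,u₁,u₂)| = 3|t| + 1, |sat_cl5(u₁,u₂,u₃,u₄,t)| = 3|t| + 3, |sat_cl5a(u₁,u₂,u₃,u₄,t)| = 3|t| + 2, |tflist(u)| = listsize(u), |t = u| = |tf(t)| = 0, where |·| on ground terms is |[h|t]| = |h| + |t|, |f(…)| = 1 otherwise, and listsize([h|t]) = listsize(t) + 1, listsize(f(…)) = 0 otherwise. That is, in every ground instance of a rule of P₃ the level of the head strictly exceeds the level of each body atom.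 -/
/-- The ground instances of the rules of program `P₃`. -/
def P3 : Set (GroundRule Atom) :=
  { r | r = ⟨.sat_cnf .nil, []⟩
      ∨ (∃ c cs, r = ⟨.sat_cnf (.cons c cs), [.sat_cl c, .sat_cnf cs]⟩)
      ∨ (∃ x, r = ⟨.eq x x, []⟩)
      ∨ (∃ p v ps, r = ⟨.sat_cl (.cons (.pair p v) ps), [.sat_cl3 ps v p]⟩)
      ∨ (∃ v p, r = ⟨.sat_cl3 .nil v p, [.eq v p]⟩)
      ∨ (∃ p2 v2 ps v1 p1,
          r = ⟨.sat_cl3 (.cons (.pair p2 v2) ps) v1 p1, [.sat_cl5 v1 p1 v2 p2 ps]⟩)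
      ∨ (∃ v1 p1 v2 p2 ps,
          r = ⟨.sat_cl5 v1 p1 v2 p2 ps, [.sat_cl5a v1 p1 v2 p2 ps]⟩)
      ∨ (∃ v1 p1 v2 p2 ps,
          r = ⟨.sat_cl5 v1 p1 v2 p2 ps, [.sat_cl5a v2 p2 v1 p1 ps]⟩)
      ∨ (∃ v1 p1 v2 p2 ps, r = ⟨.sat_cl5a v1 p1 v2 p2 ps, [.eq v1 p1]⟩)
      ∨ (∃ v1 p1 v2 p2 ps, r = ⟨.sat_cl5a v1 p1 v2 p2 ps, [.sat_cl3 ps v2 p2]⟩)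
      ∨ (∃ cs vs, r = ⟨.sat cs vs, [.sat_cnf cs, .tflist vs]⟩)
      ∨ r = ⟨.tflist .nil, []⟩
      ∨ (∃ v vs, r = ⟨.tflist (.cons v vs), [.tflist vs, .tf v]⟩)
      ∨ r = ⟨.tf .tt, []⟩
      ∨ r = ⟨.tf .ff, []⟩ }

/-- `|[h|t]| = |h| + |t|`, `|f(…)| = 1` otherwise. -/
def tmSize : Tm → ℕ
  | .cons h t => tmSize h + tmSize t
  | _ => 1

/-- `listsize([h|t]) = listsize(t) + 1`, `listsize(f(…)) = 0` otherwise. -/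
def listsize : Tm → ℕ
  | .cons _ t => listsize t + 1
  | _ => 0

/-- The level mapping for `P₃`. -/
def lvl3 : Atom → ℕ
  | .sat t u => max (3 * tmSize t) (listsize u) + 2
  | .sat_cnf t => 3 * tmSize t + 1
  | .sat_cl t => 3 * tmSize t + 1
  | .sat_cl3 t _ _ => 3 * tmSize t + 1
  | .sat_cl5 _ _ _ _ t => 3 * tmSize t + 3
  | .sat_cl5a _ _ _ _ t => 3 * tmSize t + 2
  | .tflist u => listsize u
  | .eq _ _ => 0
  | .tf _ => 0

lemma tmSize_pos : ∀ t, 1 ≤ tmSize t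
  | .cons h t => by simpa [tmSize] using Nat.le_add_right_of_le (tmSize_pos h)
  | .nil => le_refl _
  | .pair _ _ => le_refl _
  | .tt => le_refl _
  | .ff => le_refl _
  | .fn _ _ => le_refl _

/-- `P₃` is recurrent w.r.t. `lvl3`: in every ground instance of a rule of `P₃`
the level of the head strictly exceeds the level of each body atom. -/
theorem P3_recurrent :
    ∀ r ∈ P3, ∀ b ∈ r.body, lvl3 b < lvl3 r.head := by
  rintro r hr b hb
  rcases hr with h|⟨c,cs,h⟩|⟨x,h⟩|⟨p,v,ps,h⟩|⟨v,p,h⟩|⟨p2,v2,ps,v1,p1,h⟩|⟨v1,p1,v2,p2,ps,h⟩|⟨v1,p1,v2,p2,ps,h⟩|⟨v1,p1,v2,p2,ps,h⟩|⟨v1,p1,v2,p2,ps,h⟩|⟨cs,vs,h⟩|h|⟨v,vs,h⟩|h|h <;>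
    subst h <;> simp only [List.mem_cons, List.not_mem_nil, or_false] at hb
  · rcases hb with rfl|rfl
    · have := tmSize_pos cs; simp [lvl3, tmSize]; omega
    · have := tmSize_pos c; simp [lvl3, tmSize]; omega
  · subst hb
    have h1 := tmSize_pos (Tm.pair p v)
    simp [lvl3, tmSize] at h1 ⊢; try omega
  · subst hb; simp [lvl3, tmSize]
  · subst hb
    have h1 := tmSize_pos (Tm.pair p2 v2)
    simp [lvl3, tmSize] at h1 ⊢; try omega
  · subst hb; simp [lvl3]
  · subst hb; simp [lvl3]
  · subst hb; simp [lvl3]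
  · subst hb; simp [lvl3]
  · rcases hb with rfl|rfl <;> simp [lvl3] <;> omega
  · rcases hb with rfl|rfl <;> simp [lvl3, listsize]
end

section
/- The least Herbrand model of P₃, restricted to atoms for sat, contains every atom sat(t,u) where t ∈ L₂⁰ and u is a ground list whose every element is true or false (completeness of P₃ w.r.t. S₃⁰ for sat), and is contained in { sat(t,u) : t ∈ L₂, u a ground list of elements true or false } (correctness of P₃ w.r.t. S₃ for sat). -/
/-- Ground lists all of whose elements are `true` or `false`. -/
inductive TFList : Tm → Prop where
  | nil : TFList .nil
  | constt (t : Tm) : TFList t → TFList (.cons .tt t)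
  | consff (t : Tm) : TFList t → TFList (.cons .ff t)


section Aux

lemma mem_P3 {r : GroundRule Atom} (h :
      r = ⟨.sat_cnf .nil, []⟩
      ∨ (∃ c cs, r = ⟨.sat_cnf (.cons c cs), [.sat_cl c, .sat_cnf cs]⟩)
      ∨ (∃ x, r = ⟨.eq x x, []⟩)
      ∨ (∃ p v ps, r = ⟨.sat_cl (.cons (.pair p v) ps), [.sat_cl3 ps v p]⟩)
      ∨ (∃ v p, r = ⟨.sat_cl3 .nil v p, [.eq v p]⟩)
      ∨ (∃ p2 v2 ps v1 p1,
          r = ⟨.sat_cl3 (.cons (.pair p2 v2) ps) v1 p1, [.sat_cl5 v1 p1 v2 p2 ps]⟩)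
      ∨ (∃ v1 p1 v2 p2 ps,
          r = ⟨.sat_cl5 v1 p1 v2 p2 ps, [.sat_cl5a v1 p1 v2 p2 ps]⟩)
      ∨ (∃ v1 p1 v2 p2 ps,
          r = ⟨.sat_cl5 v1 p1 v2 p2 ps, [.sat_cl5a v2 p2 v1 p1 ps]⟩)
      ∨ (∃ v1 p1 v2 p2 ps, r = ⟨.sat_cl5a v1 p1 v2 p2 ps, [.eq v1 p1]⟩)
      ∨ (∃ v1 p1 v2 p2 ps, r = ⟨.sat_cl5a v1 p1 v2 p2 ps, [.sat_cl3 ps v2 p2]⟩)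
      ∨ (∃ cs vs, r = ⟨.sat cs vs, [.sat_cnf cs, .tflist vs]⟩)
      ∨ r = ⟨.tflist .nil, []⟩
      ∨ (∃ v vs, r = ⟨.tflist (.cons v vs), [.tflist vs, .tf v]⟩)
      ∨ r = ⟨.tf .tt, []⟩
      ∨ r = ⟨.tf .ff, []⟩) : r ∈ P3 := h

lemma mem_P3' {r : GroundRule Atom} (h : r ∈ P3) :
      r = ⟨.sat_cnf .nil, []⟩
      ∨ (∃ c cs, r = ⟨.sat_cnf (.cons c cs), [.sat_cl c, .sat_cnf cs]⟩)
      ∨ (∃ x, r = ⟨.eq x x, []⟩)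
      ∨ (∃ p v ps, r = ⟨.sat_cl (.cons (.pair p v) ps), [.sat_cl3 ps v p]⟩)
      ∨ (∃ v p, r = ⟨.sat_cl3 .nil v p, [.eq v p]⟩)
      ∨ (∃ p2 v2 ps v1 p1,
          r = ⟨.sat_cl3 (.cons (.pair p2 v2) ps) v1 p1, [.sat_cl5 v1 p1 v2 p2 ps]⟩)
      ∨ (∃ v1 p1 v2 p2 ps,
          r = ⟨.sat_cl5 v1 p1 v2 p2 ps, [.sat_cl5a v1 p1 v2 p2 ps]⟩)
      ∨ (∃ v1 p1 v2 p2 ps,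
          r = ⟨.sat_cl5 v1 p1 v2 p2 ps, [.sat_cl5a v2 p2 v1 p1 ps]⟩)
      ∨ (∃ v1 p1 v2 p2 ps, r = ⟨.sat_cl5a v1 p1 v2 p2 ps, [.eq v1 p1]⟩)
      ∨ (∃ v1 p1 v2 p2 ps, r = ⟨.sat_cl5a v1 p1 v2 p2 ps, [.sat_cl3 ps v2 p2]⟩)
      ∨ (∃ cs vs, r = ⟨.sat cs vs, [.sat_cnf cs, .tflist vs]⟩)
      ∨ r = ⟨.tflist .nil, []⟩
      ∨ (∃ v vs, r = ⟨.tflist (.cons v vs), [.tflist vs, .tf v]⟩)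
      ∨ r = ⟨.tf .tt, []⟩
      ∨ r = ⟨.tf .ff, []⟩ := h

lemma lhm_eq_refl (x : Tm) : LHM P3 (.eq x x) :=
  LHM.intro ⟨.eq x x, []⟩ (mem_P3 (Or.inr (Or.inr (Or.inl ⟨x, rfl⟩)))) (by simp)

lemma lhm_tf_tt : LHM P3 (.tf .tt) :=
  LHM.intro ⟨.tf .tt, []⟩
    (mem_P3 (Or.inr (Or.inr (Or.inr (Or.inr (Or.inr (Or.inr (Or.inr (Or.inr (Or.inr (Or.inr
      (Or.inr (Or.inr (Or.inr (Or.inl rfl))))))))))))))) (by simp)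

lemma lhm_tf_ff : LHM P3 (.tf .ff) :=
  LHM.intro ⟨.tf .ff, []⟩
    (mem_P3 (Or.inr (Or.inr (Or.inr (Or.inr (Or.inr (Or.inr (Or.inr (Or.inr (Or.inr (Or.inr
      (Or.inr (Or.inr (Or.inr (Or.inr rfl))))))))))))))) (by simp)

lemma lhm_tflist {u : Tm} (h : TFList u) : LHM P3 (.tflist u) := by
  induction h with
  | nil =>
    exact LHM.intro ⟨.tflist .nil, []⟩
      (mem_P3 (Or.inr (Or.inr (Or.inr (Or.inr (Or.inr (Or.inr (Or.inr (Or.inr (Or.inr (Or.inr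
        (Or.inr (Or.inl rfl))))))))))))) (by simp)
  | constt t ht ih =>
    refine LHM.intro ⟨.tflist (.cons .tt t), [.tflist t, .tf .tt]⟩
      (mem_P3 (Or.inr (Or.inr (Or.inr (Or.inr (Or.inr (Or.inr (Or.inr (Or.inr (Or.inr (Or.inr
        (Or.inr (Or.inr (Or.inl ⟨.tt, t, rfl⟩)))))))))))))) ?_
    intro b hb
    simp only [List.mem_cons, List.not_mem_nil, or_false] at hb
    rcases hb with rfl | rfl
    · exact ih
    · exact lhm_tf_tt
  | consff t ht ih =>
    refine LHM.intro ⟨.tflist (.cons .ff t), [.tflist t, .tf .ff]⟩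
      (mem_P3 (Or.inr (Or.inr (Or.inr (Or.inr (Or.inr (Or.inr (Or.inr (Or.inr (Or.inr (Or.inr
        (Or.inr (Or.inr (Or.inl ⟨.ff, t, rfl⟩)))))))))))))) ?_
    intro b hb
    simp only [List.mem_cons, List.not_mem_nil, or_false] at hb
    rcases hb with rfl | rfl
    · exact ih
    · exact lhm_tf_ff

lemma lhm_cl5a_left (v1 v2 p2 ps : Tm) : LHM P3 (.sat_cl5a v1 v1 v2 p2 ps) :=
  LHM.intro ⟨.sat_cl5a v1 v1 v2 p2 ps, [.eq v1 v1]⟩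
    (mem_P3 (Or.inr (Or.inr (Or.inr (Or.inr (Or.inr (Or.inr (Or.inr (Or.inr (Or.inl
      ⟨v1, v1, v2, p2, ps, rfl⟩))))))))))
    (by intro b hb; simp at hb; subst hb; exact lhm_eq_refl v1)

lemma lhm_cl5a_right {v2 p2 ps : Tm} (v1 p1 : Tm) (h : LHM P3 (.sat_cl3 ps v2 p2)) :
    LHM P3 (.sat_cl5a v1 p1 v2 p2 ps) :=
  LHM.intro ⟨.sat_cl5a v1 p1 v2 p2 ps, [.sat_cl3 ps v2 p2]⟩
    (mem_P3 (Or.inr (Or.inr (Or.inr (Or.inr (Or.inr (Or.inr (Or.inr (Or.inr (Or.inr (Or.inl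
      ⟨v1, p1, v2, p2, ps, rfl⟩)))))))))))
    (by intro b hb; simp at hb; subst hb; exact h)

lemma lhm_cl5_of_cl5a {v1 p1 v2 p2 ps : Tm} (h : LHM P3 (.sat_cl5a v1 p1 v2 p2 ps)) :
    LHM P3 (.sat_cl5 v1 p1 v2 p2 ps) :=
  LHM.intro ⟨.sat_cl5 v1 p1 v2 p2 ps, [.sat_cl5a v1 p1 v2 p2 ps]⟩
    (mem_P3 (Or.inr (Or.inr (Or.inr (Or.inr (Or.inr (Or.inr (Or.inl ⟨v1, p1, v2, p2, ps, rfl⟩))))))))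
    (by intro b hb; simp at hb; subst hb; exact h)

lemma lhm_cl5_of_cl5a_swap {v1 p1 v2 p2 ps : Tm} (h : LHM P3 (.sat_cl5a v2 p2 v1 p1 ps)) :
    LHM P3 (.sat_cl5 v1 p1 v2 p2 ps) :=
  LHM.intro ⟨.sat_cl5 v1 p1 v2 p2 ps, [.sat_cl5a v2 p2 v1 p1 ps]⟩
    (mem_P3 (Or.inr (Or.inr (Or.inr (Or.inr (Or.inr (Or.inr (Or.inr (Or.inl ⟨v1, p1, v2, p2, ps, rfl⟩)))))))))
    (by intro b hb; simp at hb; subst hb; exact h)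

lemma lhm_cl3_cons {p2 v2 ps v1 p1 : Tm} (h : LHM P3 (.sat_cl5 v1 p1 v2 p2 ps)) :
    LHM P3 (.sat_cl3 (.cons (.pair p2 v2) ps) v1 p1) :=
  LHM.intro ⟨.sat_cl3 (.cons (.pair p2 v2) ps) v1 p1, [.sat_cl5 v1 p1 v2 p2 ps]⟩
    (mem_P3 (Or.inr (Or.inr (Or.inr (Or.inr (Or.inr (Or.inl ⟨p2, v2, ps, v1, p1, rfl⟩)))))))
    (by intro b hb; simp at hb; subst hb; exact h)

lemma lhm_cl3_refl {ps : Tm} (h : PairList ps) (v : Tm) : LHM P3 (.sat_cl3 ps v v) := by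
  cases h with
  | nil =>
    exact LHM.intro ⟨.sat_cl3 .nil v v, [.eq v v]⟩
      (mem_P3 (Or.inr (Or.inr (Or.inr (Or.inr (Or.inl ⟨v, v, rfl⟩))))))
      (by intro b hb; simp at hb; subst hb; exact lhm_eq_refl v)
  | cons t u s hs =>
    exact lhm_cl3_cons (lhm_cl5_of_cl5a (lhm_cl5a_left v u t s))

lemma lhm_cl3_L1o {ps : Tm} (h : L1o ps) (v p : Tm) : LHM P3 (.sat_cl3 ps v p) := by
  induction h generalizing v p with
  | here u s hs =>
    exact lhm_cl3_cons (lhm_cl5_of_cl5a_swap (lhm_cl5a_left u v p s))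
  | there t u s hs ih =>
    exact lhm_cl3_cons (lhm_cl5_of_cl5a_swap (lhm_cl5a_right u t (ih v p)))

lemma lhm_sat_cl {c : Tm} (h : L1o c) : LHM P3 (.sat_cl c) := by
  cases h with
  | here u s hs =>
    exact LHM.intro ⟨.sat_cl (.cons (.pair u u) s), [.sat_cl3 s u u]⟩
      (mem_P3 (Or.inr (Or.inr (Or.inr (Or.inl ⟨u, u, s, rfl⟩)))))
      (by intro b hb; simp at hb; subst hb; exact lhm_cl3_refl hs u)
  | there t u s hs =>
    exact LHM.intro ⟨.sat_cl (.cons (.pair t u) s), [.sat_cl3 s u t]⟩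
      (mem_P3 (Or.inr (Or.inr (Or.inr (Or.inl ⟨t, u, s, rfl⟩)))))
      (by intro b hb; simp at hb; subst hb; exact lhm_cl3_L1o hs u t)

lemma lhm_sat_cnf {t : Tm} (h : L2o t) : LHM P3 (.sat_cnf t) := by
  induction h with
  | nil => exact LHM.intro ⟨.sat_cnf .nil, []⟩ (mem_P3 (Or.inl rfl)) (by simp)
  | cons c cs hc hcs ih =>
    refine LHM.intro ⟨.sat_cnf (.cons c cs), [.sat_cl c, .sat_cnf cs]⟩
      (mem_P3 (Or.inr (Or.inl ⟨c, cs, rfl⟩))) ?_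
    intro b hb
    simp only [List.mem_cons, List.not_mem_nil, or_false] at hb
    rcases hb with rfl | rfl
    · exact lhm_sat_cl hc
    · exact ih

/-- The correctness invariant. -/
def Mot : Atom → Prop
  | .sat_cnf t => L2 t
  | .sat_cl t => L1 t
  | .eq x y => x = y
  | .sat_cl3 ps v p => v = p ∨ L1 ps
  | .sat_cl5 v1 p1 v2 p2 ps => v1 = p1 ∨ v2 = p2 ∨ L1 ps
  | .sat_cl5a v1 p1 v2 p2 ps => v1 = p1 ∨ v2 = p2 ∨ L1 ps
  | .sat t u => L2 t ∧ TFList u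
  | .tflist u => TFList u
  | .tf v => v = .tt ∨ v = .ff

lemma lhm_mot : ∀ a, LHM P3 a → Mot a := by
  intro a h
  induction h with
  | intro r hr hb ih =>
    rcases mem_P3' hr with h | ⟨c, cs, h⟩ | ⟨x, h⟩ | ⟨p, v, ps, h⟩ | ⟨v, p, h⟩
      | ⟨p2, v2, ps, v1, p1, h⟩ | ⟨v1, p1, v2, p2, ps, h⟩ | ⟨v1, p1, v2, p2, ps, h⟩
      | ⟨v1, p1, v2, p2, ps, h⟩ | ⟨v1, p1, v2, p2, ps, h⟩ | ⟨cs, vs, h⟩ | h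
      | ⟨v, vs, h⟩ | h | h <;> subst h
    · exact L2.nil
    · exact L2.cons c cs (ih (.sat_cl c) (by simp)) (ih (.sat_cnf cs) (by simp))
    · rfl
    · have h3 : Mot (.sat_cl3 ps v p) := ih (.sat_cl3 ps v p) (by simp)
      rcases h3 with h3 | h3
      · subst h3; exact L1.here _ _
      · exact L1.there _ _ h3
    · exact Or.inl (ih (.eq v p) (by simp))
    · have h5 : Mot (.sat_cl5 v1 p1 v2 p2 ps) := ih (.sat_cl5 v1 p1 v2 p2 ps) (by simp)
      rcases h5 with h5 | h5 | h5
      · exact Or.inl h5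
      · subst h5; exact Or.inr (L1.here _ _)
      · exact Or.inr (L1.there _ _ h5)
    · exact ih (.sat_cl5a v1 p1 v2 p2 ps) (by simp)
    · have h5 : Mot (.sat_cl5a v2 p2 v1 p1 ps) := ih (.sat_cl5a v2 p2 v1 p1 ps) (by simp)
      rcases h5 with h5 | h5 | h5
      · exact Or.inr (Or.inl h5)
      · exact Or.inl h5
      · exact Or.inr (Or.inr h5)
    · exact Or.inl (ih (.eq v1 p1) (by simp))
    · have h3 : Mot (.sat_cl3 ps v2 p2) := ih (.sat_cl3 ps v2 p2) (by simp)
      rcases h3 with h3 | h3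
      · exact Or.inr (Or.inl h3)
      · exact Or.inr (Or.inr h3)
    · exact ⟨ih (.sat_cnf cs) (by simp), ih (.tflist vs) (by simp)⟩
    · exact TFList.nil
    · have htf : Mot (.tf v) := ih (.tf v) (by simp)
      have hl : Mot (.tflist vs) := ih (.tflist vs) (by simp)
      rcases htf with rfl | rfl
      · exact TFList.constt vs hl
      · exact TFList.consff vs hl
    · exact Or.inl rfl
    · exact Or.inr rfl

end Aux

/-- The least Herbrand model of `P₃` restricted to atoms for `sat` contains every
`sat(t,u)` with `t ∈ L₂⁰` and `u` a ground list of truth values (completeness w.r.t. `S₃⁰`),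
and is contained in `{ sat(t,u) : t ∈ L₂, u a ground list of truth values }`
(correctness w.r.t. `S₃`). -/
theorem P3_sat_correct_and_complete :
    ∀ t u : Tm,
      (L2o t → TFList u → LHM P3 (.sat t u)) ∧
      (LHM P3 (.sat t u) → L2 t ∧ TFList u) := by
  intro t u
  constructor
  · intro ht hu
    refine LHM.intro ⟨.sat t u, [.sat_cnf t, .tflist u]⟩
      (mem_P3 (Or.inr (Or.inr (Or.inr (Or.inr (Or.inr (Or.inr (Or.inr (Or.inr (Or.inr (Or.inr
        (Or.inl ⟨t, u, rfl⟩)))))))))))) ?_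
    intro b hb
    simp only [List.mem_cons, List.not_mem_nil, or_false] at hb
    rcases hb with rfl | rfl
    · exact lhm_sat_cnf ht
    · exact lhm_tflist hu
  · intro h
    exact lhm_mot _ h
end

section
/- If P is a definite clause program and | · | a level mapping such that P is recurrent, then every ground query all of whose instances have the same (finite) level bound terminates: there is no infinite SLD-derivation from a bounded query, under any selection rule. In particular, for the ground program ground(P), every derivation starting from a ground query is finite. -/
/-- One SLD-resolution step for the ground program `P`: some selected atom of the query
is replaced by the body of a ground rule instance whose head is that atom. -/
def Step {α : Type} (P : Set (GroundRule α)) (q q' : List α) : Prop :=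
  ∃ (q₁ q₂ : List α) (r : GroundRule α),
    r ∈ P ∧ q = q₁ ++ r.head :: q₂ ∧ q' = q₁ ++ r.body ++ q₂

/- Resolving an atom of level `k` replaces one occurrence of `k` in the multiset of levels of the
query by finitely many levels below `k`: a Dershowitz–Manna decrease. -/
theorem Step.isDershowitzMannaLT_map {α : Type} {P : Set (GroundRule α)} {lvl : α → ℕ}
    (hrec : Recurrent P lvl) {q q' : List α} (h : Step P q q') :
    Multiset.IsDershowitzMannaLT (q'.map lvl : Multiset ℕ) (q.map lvl) := by
  obtain ⟨q₁, q₂, r, hr, rfl, rfl⟩ := h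
  refine ⟨(q₁.map lvl : Multiset ℕ) + (q₂.map lvl : Multiset ℕ), r.body.map lvl,
    {lvl r.head}, by simp, ?_, ?_, ?_⟩
  · simp only [List.map_append, ← Multiset.coe_add]
    exact add_right_comm _ _ _
  · simp only [List.map_append, List.map_cons, ← Multiset.coe_add, ← Multiset.cons_coe]
    rw [Multiset.add_cons, ← Multiset.singleton_add, add_comm]
  · simpa using hrec r hr

theorem Recurrent.wellFounded_flip_step {α : Type} {P : Set (GroundRule α)} {lvl : α → ℕ}
    (hrec : Recurrent P lvl) : WellFounded (flip (Step P)) :=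
  Subrelation.wf (fun h => h.isDershowitzMannaLT_map hrec)
    (InvImage.wf (fun q : List α => (q.map lvl : Multiset ℕ))
      Multiset.wellFounded_isDershowitzMannaLT)

/-- If `P` is recurrent w.r.t. a level mapping, then every (ground, hence bounded) query
terminates: there is no infinite derivation from any ground query, under any selection
rule (selection of the atom at each step is arbitrary). -/
theorem recurrent_terminates {α : Type}
    (P : Set (GroundRule α)) (lvl : α → ℕ)
    (hrec : Recurrent P lvl) :
    ¬ ∃ f : ℕ → List α, ∀ n, Step P (f n) (f (n + 1)) := by
  rintro ⟨f, hf⟩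
  exact (wellFounded_iff_isEmpty_descending_chain.mp hrec.wellFounded_flip_step).false ⟨f, hf⟩
end

section
/- Lifting prunes to ground completeness: let Π₁,…,Πₙ be definite programs over the same signature and S a specification such that every atom of S is covered w.r.t. S by each Πᵢ individually. Consider derivations for the ground program in which at each step the ground rule instance used may be taken from any single (possibly different at each step) ground(Πᵢ). If from a ground query Q with all atoms in S every such derivation is finite, then some such derivation from Q is successful (ends in the empty query); hence all atoms of Q are in the least Herbrand model of ⋃ᵢ Πᵢ. -/
/-- One step of a cs-derivation for programs `Ps 0, …, Ps (n-1)`: at each step the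
ground rule instance used is taken from a single (per-step chosen) program. -/
def CsStep {α : Type} {n : ℕ} (Ps : Fin n → Set (GroundRule α)) (q q' : List α) : Prop :=
  ∃ i, Step (Ps i) q q'

/-!
Covering by one fixed program `Ps i` already lets every nonempty query of atoms of `S` be
resolved (at its leftmost atom) into another query of atoms of `S`. So as long as the empty
query is not reached the derivation can be continued, and a query that never reaches `[]`
would start an infinite cs-derivation. Successful derivations are sound for the least
Herbrand model, because every resolution step is an application of the defining rule of `LHM`.
-/

open Relation

theorem Relation.ReflTransGen.of_progress {β : Type*} {r : β → β → Prop} {p : β → Prop} {a b : β}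
    (hprogress : ∀ x, p x → x ≠ b → ∃ y, r x y ∧ p y) (ha : p a)
    (hfin : ¬ ∃ f : ℕ → β, f 0 = a ∧ ∀ k, r (f k) (f (k + 1))) :
    ReflTransGen r a b := by
  by_contra hab
  have hnext : ∀ x : {x // p x ∧ ReflTransGen r a x}, ∃ y : {x // p x ∧ ReflTransGen r a x},
      r x y := by
    rintro ⟨x, hx, hax⟩
    obtain ⟨y, hxy, hy⟩ := hprogress x hx fun hxb => hab (hxb ▸ hax)
    exact ⟨⟨y, hy, hax.tail hxy⟩, hxy⟩
  choose next hnext using hnext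
  refine hfin ⟨fun k => (next^[k] ⟨a, ha, .refl⟩).1, rfl, fun k => ?_⟩
  simpa only [Function.iterate_succ_apply'] using hnext _

section Resolution

variable {α : Type}

theorem Step.mono {P P' : Set (GroundRule α)} (hPP' : P ⊆ P') {q q' : List α}
    (h : Step P q q') : Step P' q q' := by
  obtain ⟨q₁, q₂, r, hr, hq, hq'⟩ := h
  exact ⟨q₁, q₂, r, hPP' hr, hq, hq'⟩

theorem CsStep.step_iUnion {n : ℕ} {Ps : Fin n → Set (GroundRule α)} {q q' : List α}
    (h : CsStep Ps q q') : Step (⋃ i, Ps i) q q' := by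
  obtain ⟨i, hi⟩ := h
  exact hi.mono (Set.subset_iUnion Ps i)

theorem Step.exists_of_covered {P : Set (GroundRule α)} {S : Set α}
    (hcov : ∀ A ∈ S, Covered P S A) {q : List α} (hq : ∀ a ∈ q, a ∈ S) (hne : q ≠ []) :
    ∃ q', Step P q q' ∧ ∀ a ∈ q', a ∈ S := by
  obtain ⟨A, t, rfl⟩ := List.exists_cons_of_ne_nil hne
  obtain ⟨r, hr, rfl, hbody⟩ := hcov A (hq _ List.mem_cons_self)
  refine ⟨r.body ++ t, ⟨[], t, r, hr, rfl, rfl⟩, fun a ha => ?_⟩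
  rcases List.mem_append.mp ha with ha | ha
  · exact hbody a ha
  · exact hq a (List.mem_cons_of_mem _ ha)

theorem Step.forall_lhm {P : Set (GroundRule α)} {q q' : List α} (h : Step P q q')
    (h' : ∀ a ∈ q', LHM P a) : ∀ a ∈ q, LHM P a := by
  obtain ⟨q₁, q₂, r, hr, rfl, rfl⟩ := h
  have hhead : LHM P r.head := LHM.intro r hr fun b hb => h' b (by simp [hb])
  intro a ha
  simp only [List.mem_append, List.mem_cons] at ha
  rcases ha with ha | rfl | ha
  · exact h' a (by simp [ha])
  · exact hhead
  · exact h' a (by simp [ha])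

theorem forall_lhm_of_reflTransGen_step_nil {P : Set (GroundRule α)} {q : List α}
    (h : ReflTransGen (Step P) q []) : ∀ a ∈ q, LHM P a := by
  induction h using ReflTransGen.head_induction_on with
  | refl => simp
  | head hstep _ ih => exact hstep.forall_lhm ih

end Resolution

/-- Ground core of completeness of csSLD-trees: if every atom of `S` is covered w.r.t. `S`
by each program `Ps i` individually, `Q` is a ground query with all atoms in `S`, and every
cs-derivation from `Q` is finite, then some cs-derivation from `Q` is successful (reaches
the empty query), and hence all atoms of `Q` are in the least Herbrand model of `⋃ i, Ps i`. -/
theorem cs_pruning_preserves_completeness {α : Type} (n : ℕ) (hn : 0 < n)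
    (Ps : Fin n → Set (GroundRule α)) (S : Set α) (Q : List α)
    (hcov : ∀ i, ∀ A ∈ S, Covered (Ps i) S A)
    (hQ : ∀ a ∈ Q, a ∈ S)
    (hfin : ¬ ∃ f : ℕ → List α, f 0 = Q ∧ ∀ k, CsStep Ps (f k) (f (k + 1))) :
    Relation.ReflTransGen (CsStep Ps) Q [] ∧ ∀ a ∈ Q, LHM (⋃ i, Ps i) a := by
  have hsucc : ReflTransGen (CsStep Ps) Q [] := by
    refine .of_progress (p := fun q => ∀ a ∈ q, a ∈ S) (fun q hq hne => ?_) hQ hfin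
    obtain ⟨q', hstep, hq'⟩ := Step.exists_of_covered (hcov ⟨0, hn⟩) hq hne
    exact ⟨q', ⟨⟨0, hn⟩, hstep⟩, hq'⟩
  have hsucc_iUnion : ReflTransGen (Step (⋃ i, Ps i)) Q [] :=
    ReflTransGen.mono (fun _ _ => CsStep.step_iUnion) _ _ hsucc
  exact ⟨hsucc, forall_lhm_of_reflTransGen_step_nil hsucc_iUnion⟩
end
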